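/- For every real α > -1/2 and every real x, the Bessel function of the first kind satisfies |J_α(x)| ≤ |x|^α / (2^α · Γ(α+1)). -/

import Mathlib

open Real

/-- The Bessel function of the first kind of order `α`, defined by its power series
`J_α(x) = ∑_{m≥0} (-1)^m / (m! Γ(m+α+1)) (x/2)^(2m+α)` (powers interpreted via `Real.rpow`). -/
noncomputable def besselJ (α x : ℝ) : ℝ :=
    ∑' m : ℕ, ((-1 : ℝ) ^ m / (m.factorial * Real.Gamma (m + α + 1))) *
      (x / 2) ^ (2 * (m : ℝ) + α)

/-- Coefficients of the Bessel power series in `y = (x/2)^2`. -/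
noncomputable def bcoef (α : ℝ) (m : ℕ) : ℝ :=
    (-1 : ℝ) ^ m / (m.factorial * Real.Gamma (m + α + 1))

/-- Shift operator on coefficient sequences, matching term-by-term differentiation. -/
noncomputable def dshift (d : ℕ → ℝ) (m : ℕ) : ℝ := ((m : ℝ) + 1) * d (m + 1)

/-- Sum of the power series with coefficients `d`. -/
noncomputable def psum (d : ℕ → ℝ) (y : ℝ) : ℝ := ∑' m : ℕ, d m * y ^ m

lemma aux_summable {d : ℕ → ℝ} {C b : ℝ} (hd : ∀ m, |d m| ≤ C * b ^ m / m.factorial)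
    (hb : 0 ≤ b) (y : ℝ) : Summable fun m => d m * y ^ m := by
  have hC : 0 ≤ C := by have h0 := hd 0; simp at h0; linarith [abs_nonneg (d 0)]
  apply Summable.of_norm_bounded (g := fun m => C * (b * |y|) ^ m / m.factorial)
  · simpa [mul_div_assoc] using (Real.summable_pow_div_factorial (b * |y|)).mul_left C
  · intro m
    rw [norm_mul, norm_pow, Real.norm_eq_abs, Real.norm_eq_abs, mul_pow,
      show C * (b ^ m * |y| ^ m) / (m.factorial : ℝ) = C * b ^ m / m.factorial * |y| ^ m by ring]
    exact mul_le_mul_of_nonneg_right (hd m) (by positivity)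

lemma dshift_bound {d : ℕ → ℝ} {C b : ℝ} (hd : ∀ m, |d m| ≤ C * b ^ m / m.factorial)
    (hb : 0 ≤ b) : ∀ m, |dshift d m| ≤ (C * b) * b ^ m / m.factorial := by
  intro m
  have h := hd (m + 1)
  have h1 : |dshift d m| = ((m : ℝ) + 1) * |d (m + 1)| := by
    rw [dshift, abs_mul, abs_of_nonneg (by positivity)]
  have h2 : ((m : ℝ) + 1) * (C * b ^ (m + 1) / (m + 1).factorial)
      = C * b * b ^ m / m.factorial := by
    rw [Nat.factorial_succ, pow_succ]
    push_cast
    have hm : (m.factorial : ℝ) ≠ 0 := by positivity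
    field_simp
    try ring
  rw [h1, ← h2]
  exact mul_le_mul_of_nonneg_left h (by positivity)

lemma aux_hasDerivAt {d : ℕ → ℝ} {C b : ℝ} (hd : ∀ m, |d m| ≤ C * b ^ m / m.factorial)
    (hb : 1 ≤ b) (y : ℝ) : HasDerivAt (psum d) (psum (dshift d) y) y := by
  have hb0 : (0:ℝ) ≤ b := by linarith
  have hC : 0 ≤ C := by have h0 := hd 0; simp at h0; linarith [abs_nonneg (d 0)]
  set R : ℝ := |y| + 1 with hR
  have hR1 : (1:ℝ) ≤ R := by rw [hR]; linarith [abs_nonneg y]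
  have hyR : y ∈ Set.Ioo (-R) R := by
    constructor <;> [skip; skip] <;> cases' abs_lt.mp (show |y| < R by simp [hR]) with h1 h2 <;>
      linarith
  set u : ℕ → ℝ := fun m => C * (2 * b * R) ^ m / m.factorial with hu_def
  have hu : Summable u := by
    simpa [hu_def, mul_div_assoc] using
      (Real.summable_pow_div_factorial (2 * b * R)).mul_left C
  have hg : ∀ (m : ℕ) (z : ℝ), z ∈ Set.Ioo (-R) R →
      HasDerivAt (fun z : ℝ => d m * z ^ m) (d m * ((m : ℝ) * z ^ (m - 1))) z := by
    intro m z _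
    exact (hasDerivAt_pow m z).const_mul (d m)
  have hg' : ∀ (m : ℕ) (z : ℝ), z ∈ Set.Ioo (-R) R →
      ‖d m * ((m : ℝ) * z ^ (m - 1))‖ ≤ u m := by
    intro m z hz
    have hzR : |z| ≤ R := le_of_lt (abs_lt.mpr ⟨hz.1, hz.2⟩)
    have hm2 : (m : ℝ) ≤ 2 ^ m := by exact_mod_cast (Nat.lt_two_pow_self (n := m)).le
    have hRm : |z| ^ (m - 1) ≤ R ^ m :=
      (pow_le_pow_left₀ (abs_nonneg z) hzR _).trans
        (pow_le_pow_right₀ (by linarith) (Nat.sub_le m 1))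
    have h1 : ‖d m * ((m : ℝ) * z ^ (m - 1))‖ = |d m| * ((m : ℝ) * |z| ^ (m - 1)) := by
      rw [Real.norm_eq_abs, abs_mul, abs_mul, abs_pow, Nat.abs_cast]
    rw [h1]
    calc |d m| * ((m : ℝ) * |z| ^ (m - 1))
        ≤ (C * b ^ m / m.factorial) * (2 ^ m * R ^ m) := by
          apply mul_le_mul (hd m) _ (by positivity) (by positivity)
          exact mul_le_mul hm2 hRm (by positivity) (by positivity)
      _ = u m := by
          simp only [hu_def]
          rw [show (2 * b * R) ^ m = 2 ^ m * (b ^ m * R ^ m) by rw [mul_pow, mul_pow]; ring]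
          ring
  have hsum_y : Summable fun m => d m * y ^ m := aux_summable hd hb0 y
  have key := hasDerivAt_tsum_of_isPreconnected hu isOpen_Ioo (isPreconnected_Ioo)
    hg hg' hyR hsum_y hyR
  have hs : Summable fun m => d m * ((m : ℝ) * y ^ (m - 1)) :=
    Summable.of_norm_bounded hu (fun m => hg' m y hyR)
  have heq : (∑' m : ℕ, d m * ((m : ℝ) * y ^ (m - 1))) = psum (dshift d) y := by
    rw [hs.tsum_eq_zero_add, psum]
    simp only [Nat.cast_zero, zero_mul, mul_zero, zero_add]
    apply tsum_congr
    intro m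
    rw [dshift]
    push_cast
    ring_nf
  rw [heq] at key
  exact key

lemma aux_mul_psum {d : ℕ → ℝ} {C b : ℝ} (hd : ∀ m, |d m| ≤ C * b ^ m / m.factorial)
    (hb : 1 ≤ b) (y : ℝ) :
    y * psum (dshift d) y = ∑' m : ℕ, (m : ℝ) * d m * y ^ m := by
  have hb0 : (0:ℝ) ≤ b := by linarith
  have hs : Summable fun m : ℕ => ((m : ℝ) * d m) * y ^ m := by
    apply aux_summable (C := C) (b := 2 * b) _ (by linarith) y
    intro m
    have hm2 : (m : ℝ) ≤ 2 ^ m := by exact_mod_cast (Nat.lt_two_pow_self (n := m)).le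
    rw [abs_mul, Nat.abs_cast]
    calc (m : ℝ) * |d m| ≤ 2 ^ m * (C * b ^ m / m.factorial) :=
          mul_le_mul hm2 (hd m) (abs_nonneg _) (by positivity)
      _ = C * (2 * b) ^ m / m.factorial := by rw [mul_pow]; ring
  rw [show (∑' m : ℕ, (m : ℝ) * d m * y ^ m) = ∑' m : ℕ, ((m : ℝ) * d m) * y ^ m from rfl,
    hs.tsum_eq_zero_add]
  simp only [Nat.cast_zero, zero_mul, zero_add]
  rw [psum, ← tsum_mul_left]
  apply tsum_congr
  intro m
  rw [dshift]
  push_cast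
  ring

section Alpha

variable {α : ℝ} (hα : -1/2 < α)
include hα

lemma gamma_arg_pos (m : ℕ) : (0:ℝ) < (m : ℝ) + α + 1 := by
  have : (0:ℝ) ≤ (m : ℝ) := Nat.cast_nonneg m
  linarith

lemma gamma_pos (m : ℕ) : 0 < Real.Gamma ((m : ℝ) + α + 1) :=
  Real.Gamma_pos_of_pos (gamma_arg_pos hα m)

lemma gamma_ge (m : ℕ) : Real.Gamma (α + 1) * (1/2) ^ m ≤ Real.Gamma ((m : ℝ) + α + 1) := by
  induction m with
  | zero => simp
  | succ n ih =>
    have h1 : ((n + 1 : ℕ) : ℝ) + α + 1 = ((n : ℝ) + α + 1) + 1 := by push_cast; ring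
    rw [h1, Real.Gamma_add_one (ne_of_gt (gamma_arg_pos hα n))]
    have hg := gamma_pos hα n
    have harg : (1:ℝ)/2 ≤ (n : ℝ) + α + 1 := by
      have : (0:ℝ) ≤ (n : ℝ) := Nat.cast_nonneg n
      linarith
    calc Real.Gamma (α + 1) * (1/2) ^ (n + 1)
        = (1/2) * (Real.Gamma (α + 1) * (1/2) ^ n) := by ring
      _ ≤ (1/2) * Real.Gamma ((n : ℝ) + α + 1) := by
          apply mul_le_mul_of_nonneg_left ih (by norm_num)
      _ ≤ ((n : ℝ) + α + 1) * Real.Gamma ((n : ℝ) + α + 1) :=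
          mul_le_mul_of_nonneg_right harg hg.le

lemma bcoef_bound (m : ℕ) :
    |bcoef α m| ≤ (Real.Gamma (α + 1))⁻¹ * 2 ^ m / m.factorial := by
  have hG : 0 < Real.Gamma (α + 1) := by
    have := gamma_pos hα 0; simpa using this
  have hg := gamma_pos hα m
  have hfac : (0:ℝ) < m.factorial := by positivity
  have e1 : |bcoef α m| = 1 / (m.factorial * Real.Gamma ((m:ℝ) + α + 1)) := by
    rw [bcoef, abs_div, abs_pow, abs_neg, abs_one, one_pow,
      abs_of_pos (by positivity : (0:ℝ) < m.factorial * Real.Gamma ((m:ℝ) + α + 1))]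
  have e2 : (Real.Gamma (α + 1))⁻¹ * 2 ^ m / m.factorial
      = 1 / (m.factorial * (Real.Gamma (α + 1) * (1/2) ^ m)) := by
    field_simp
    rw [← mul_pow]; norm_num
  rw [e1, e2]
  apply one_div_le_one_div_of_le (by positivity)
  exact mul_le_mul_of_nonneg_left (gamma_ge hα m) hfac.le

lemma bcoef_rec (m : ℕ) :
    ((m : ℝ) + α + 1) * ((m : ℝ) + 1) * bcoef α (m + 1) + bcoef α m = 0 := by
  have hg := gamma_pos hα m
  have h1 : ((m + 1 : ℕ) : ℝ) + α + 1 = ((m : ℝ) + α + 1) + 1 := by push_cast; ring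
  rw [bcoef, bcoef, h1, Real.Gamma_add_one (ne_of_gt (gamma_arg_pos hα m)),
    Nat.factorial_succ, pow_succ]
  have hfac : ((m.factorial : ℝ)) ≠ 0 := by positivity
  have harg : ((m : ℝ) + α + 1) ≠ 0 := ne_of_gt (gamma_arg_pos hα m)
  push_cast
  field_simp
  ring

lemma psum_ode (y : ℝ) :
    y * psum (dshift (dshift (bcoef α))) y + (α + 1) * psum (dshift (bcoef α)) y
      + psum (bcoef α) y = 0 := by
  set C := (Real.Gamma (α + 1))⁻¹ with hC
  have hb0 := bcoef_bound hα
  have hb1 := dshift_bound hb0 (by norm_num)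
  have hs0 : Summable fun m : ℕ => bcoef α m * y ^ m := aux_summable hb0 (by norm_num) y
  have hs1 : Summable fun m : ℕ => dshift (bcoef α) m * y ^ m :=
    aux_summable hb1 (by norm_num) y
  have hs1' : Summable fun m : ℕ => (α + 1) * (dshift (bcoef α) m * y ^ m) := hs1.mul_left _
  have hsm : Summable fun m : ℕ => (m : ℝ) * dshift (bcoef α) m * y ^ m := by
    apply aux_summable (C := C * 2) (b := 4) _ (by norm_num) y
    intro m
    have hm2 : (m : ℝ) ≤ 2 ^ m := by exact_mod_cast (Nat.lt_two_pow_self (n := m)).le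
    rw [abs_mul, Nat.abs_cast]
    calc (m : ℝ) * |dshift (bcoef α) m| ≤ 2 ^ m * (C * 2 * 2 ^ m / m.factorial) :=
          mul_le_mul hm2 (hb1 m) (abs_nonneg _) (by positivity)
      _ = C * 2 * 4 ^ m / m.factorial := by
          rw [show (4:ℝ) ^ m = 2 ^ m * 2 ^ m by rw [← mul_pow]; norm_num]
          ring
  have h1 : y * psum (dshift (dshift (bcoef α))) y
      = ∑' m : ℕ, (m : ℝ) * dshift (bcoef α) m * y ^ m :=
    aux_mul_psum hb1 (by norm_num) y
  have h2 : (α + 1) * psum (dshift (bcoef α)) y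
      = ∑' m : ℕ, (α + 1) * (dshift (bcoef α) m * y ^ m) := by
    rw [psum, ← tsum_mul_left]
  rw [h1, h2, psum, ← Summable.tsum_add hsm hs1', ← Summable.tsum_add (hsm.add hs1') hs0]
  have : ∀ m : ℕ, (m : ℝ) * dshift (bcoef α) m * y ^ m
      + (α + 1) * (dshift (bcoef α) m * y ^ m) + bcoef α m * y ^ m = 0 := by
    intro m
    have hrec := bcoef_rec hα m
    have h : (m : ℝ) * dshift (bcoef α) m + (α + 1) * dshift (bcoef α) m + bcoef α m = 0 := by
      rw [dshift]
      linear_combination hrec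
    linear_combination y ^ m * h
  simp only [this, tsum_zero]

lemma psum_abs_le {y : ℝ} (hy : 0 ≤ y) :
    |psum (bcoef α) y| ≤ (Real.Gamma (α + 1))⁻¹ := by
  have hG : 0 < Real.Gamma (α + 1) := by have := gamma_pos hα 0; simpa using this
  set f0 := psum (bcoef α) with hf0
  set f1 := psum (dshift (bcoef α)) with hf1
  set f2 := psum (dshift (dshift (bcoef α))) with hf2
  have hb0 := bcoef_bound hα
  have hb1 := dshift_bound hb0 (by norm_num)
  have hd0 : ∀ z, HasDerivAt f0 (f1 z) z := fun z => aux_hasDerivAt hb0 (by norm_num) z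
  have hd1 : ∀ z, HasDerivAt f1 (f2 z) z := fun z => aux_hasDerivAt hb1 (by norm_num) z
  set E : ℝ → ℝ := fun z => f0 z * f0 z + z * (f1 z * f1 z) with hE_def
  have hE : ∀ z, HasDerivAt E
      (f1 z * f0 z + f0 z * f1 z + (1 * (f1 z * f1 z) + z * (f2 z * f1 z + f1 z * f2 z))) z := by
    intro z
    exact ((hd0 z).mul (hd0 z)).add ((hasDerivAt_id z).mul ((hd1 z).mul (hd1 z)))
  have hderiv_nonpos : ∀ z, f1 z * f0 z + f0 z * f1 z
      + (1 * (f1 z * f1 z) + z * (f2 z * f1 z + f1 z * f2 z)) ≤ 0 := by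
    intro z
    have hode := psum_ode hα z
    have hz2 : z * f2 z = -((α + 1) * f1 z + f0 z) := by
      rw [← hf0, ← hf1, ← hf2] at hode; linarith
    have : f1 z * f0 z + f0 z * f1 z + (1 * (f1 z * f1 z) + z * (f2 z * f1 z + f1 z * f2 z))
        = (-1 - 2*α) * (f1 z * f1 z) := by
      have h : z * (f2 z * f1 z + f1 z * f2 z) = (z * f2 z) * f1 z + f1 z * (z * f2 z) := by ring
      rw [h, hz2]; ring
    rw [this]
    have := sq_nonneg (f1 z)
    nlinarith [sq_nonneg (f1 z)]
  have hanti : AntitoneOn E (Set.Ici (0:ℝ)) := by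
    apply antitoneOn_of_deriv_nonpos (convex_Ici 0)
    · intro z _; exact (hE z).continuousAt.continuousWithinAt
    · intro z _; exact (hE z).differentiableAt.differentiableWithinAt
    · intro z _
      rw [(hE z).deriv]
      exact hderiv_nonpos z
  have hE0 : E y ≤ E 0 := hanti (Set.self_mem_Ici) hy hy
  have hf00 : f0 0 = (Real.Gamma (α + 1))⁻¹ := by
    rw [hf0, psum, tsum_eq_single 0 (by intro m hm; simp [zero_pow hm])]
    simp [bcoef]
  have hfy : f0 y * f0 y ≤ (Real.Gamma (α + 1))⁻¹ * (Real.Gamma (α + 1))⁻¹ := by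
    have h1 : 0 ≤ y * (f1 y * f1 y) := mul_nonneg hy (mul_self_nonneg _)
    have h2 : E 0 = f0 0 * f0 0 := by simp [hE_def]
    rw [← hf00, ← h2]
    have : E y = f0 y * f0 y + y * (f1 y * f1 y) := rfl
    linarith [hE0]
  have : |f0 y| ^ 2 ≤ ((Real.Gamma (α + 1))⁻¹) ^ 2 := by
    rw [sq_abs]; nlinarith [hfy]
  calc |f0 y| = Real.sqrt (|f0 y| ^ 2) := (Real.sqrt_sq (abs_nonneg _)).symm
    _ ≤ Real.sqrt (((Real.Gamma (α + 1))⁻¹) ^ 2) := Real.sqrt_le_sqrt this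
    _ = (Real.Gamma (α + 1))⁻¹ := Real.sqrt_sq (by positivity)

lemma besselJ_pos_eq {x : ℝ} (hx : 0 < x) :
    besselJ α x = psum (bcoef α) ((x / 2) ^ 2) * (x / 2) ^ α := by
  rw [besselJ, psum, ← tsum_mul_right]
  apply tsum_congr
  intro m
  have ht : (0:ℝ) < x / 2 := by linarith
  have h1 : (x / 2) ^ (2 * (m : ℝ) + α) = (x / 2) ^ (2 * (m : ℝ)) * (x / 2) ^ α :=
    Real.rpow_add ht _ _
  have h2 : (x / 2) ^ (2 * (m : ℝ)) = ((x / 2) ^ 2) ^ m := by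
    rw [show (2 * (m : ℝ)) = ((2 * m : ℕ) : ℝ) by push_cast; ring, Real.rpow_natCast, pow_mul]
  rw [h1, h2, bcoef]
  ring

lemma besselJ_abs_le_of_pos {x : ℝ} (hx : 0 < x) :
    |besselJ α x| ≤ x ^ α / (2 ^ α * Real.Gamma (α + 1)) := by
  have hG : 0 < Real.Gamma (α + 1) := by have := gamma_pos hα 0; simpa using this
  have ht : (0:ℝ) < x / 2 := by linarith
  rw [besselJ_pos_eq hα hx, abs_mul, abs_of_nonneg (Real.rpow_nonneg ht.le α)]
  have hb := psum_abs_le hα (show (0:ℝ) ≤ (x/2)^2 by positivity)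
  calc |psum (bcoef α) ((x / 2) ^ 2)| * (x / 2) ^ α
      ≤ (Real.Gamma (α + 1))⁻¹ * (x / 2) ^ α :=
        mul_le_mul_of_nonneg_right hb (Real.rpow_nonneg ht.le α)
    _ = x ^ α / (2 ^ α * Real.Gamma (α + 1)) := by
        rw [Real.div_rpow hx.le (by norm_num : (0:ℝ) ≤ 2), inv_mul_eq_div, div_div]

end Alpha

/-- For every real `α > -1/2` and every real `x`,
`|J_α(x)| ≤ |x|^α / (2^α · Γ(α+1))`. -/
theorem besselJ_abs_le (α x : ℝ) (hα : -1/2 < α) :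
    |besselJ α x| ≤ |x| ^ α / (2 ^ α * Real.Gamma (α + 1)) := by
  have hG : 0 < Real.Gamma (α + 1) := Real.Gamma_pos_of_pos (by linarith)
  have h2 : (0:ℝ) < (2:ℝ) ^ α := Real.rpow_pos_of_pos (by norm_num) α
  rcases lt_trichotomy x 0 with hx | hx | hx
  · -- x < 0
    have hx2 : x / 2 < 0 := by linarith
    have habs : |x| = -x := abs_of_neg hx
    have key : besselJ α x = besselJ α |x| * Real.cos (α * π) := by
      rw [besselJ, besselJ, ← tsum_mul_right]
      apply tsum_congr
      intro m
      have hterm : (x / 2) ^ (2 * (m : ℝ) + α)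
          = (|x| / 2) ^ (2 * (m : ℝ) + α) * Real.cos (α * π) := by
        rw [Real.rpow_def_of_neg hx2,
          Real.rpow_def_of_pos (by rw [habs]; linarith : (0:ℝ) < |x| / 2)]
        have hlog : Real.log (x / 2) = Real.log (|x| / 2) := by
          rw [habs, show -x / 2 = -(x/2) by ring, Real.log_neg_eq_log]
        rw [hlog]
        have hcos : Real.cos ((2 * (m : ℝ) + α) * π) = Real.cos (α * π) := by
          rw [show (2 * (m : ℝ) + α) * π = α * π + (m : ℝ) * (2 * π) by ring]
          exact Real.cos_add_nat_mul_two_pi _ m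
        rw [hcos]
      rw [hterm]; ring
    rw [key, abs_mul]
    have hb := besselJ_abs_le_of_pos hα (show (0:ℝ) < |x| by rwa [habs, neg_pos])
    calc abs (besselJ α |x|) * abs (Real.cos (α * π))
        ≤ abs (besselJ α |x|) * 1 :=
          mul_le_mul_of_nonneg_left (Real.abs_cos_le_one _) (abs_nonneg _)
      _ = abs (besselJ α |x|) := mul_one _
      _ ≤ |x| ^ α / (2 ^ α * Real.Gamma (α + 1)) := hb
  · -- x = 0
    subst hx
    rcases eq_or_ne α 0 with hα0 | hα0
    · subst hα0
      have : besselJ 0 0 = 1 := by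
        rw [besselJ, tsum_eq_single 0]
        · norm_num [Real.Gamma_one]
        · intro m hm
          have hm1 : (1:ℝ) ≤ (m : ℝ) := by
            exact_mod_cast Nat.one_le_iff_ne_zero.mpr hm
          have h2m : (2 * (m : ℝ)) ≠ 0 := by positivity
          have h2m' : (2 * (m : ℝ) + 0) ≠ 0 := by simpa using h2m
          simp [Real.zero_rpow h2m, Real.zero_rpow h2m']
      rw [this]
      simp [Real.Gamma_one]
    · have : besselJ α 0 = 0 := by
        rw [besselJ]
        convert tsum_zero with m
        have hne : (2 * (m : ℝ) + α) ≠ 0 := by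
          rcases Nat.eq_zero_or_pos m with hm | hm
          · simpa [hm] using hα0
          · have : (1:ℝ) ≤ (m : ℝ) := by exact_mod_cast hm
            have : (0:ℝ) < 2 * (m:ℝ) + α := by linarith
            exact ne_of_gt this
        simp [Real.zero_rpow hne]
      rw [this, abs_zero]
      positivity
  · -- x > 0
    rw [abs_of_pos hx]
    exact besselJ_abs_le_of_pos hα hx
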